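/- arXiv:0802.3590 — 4 statements merged into one kernel-verified Lean document; each statement's English description precedes it below -/
import Mathlib

section
/- Let 𝔤 be a Lie algebra over a field of characteristic zero, V a vector space with a bracket [·,·] : V × V → V, and L, R : V → 𝔤 linear maps satisfying the generalized Maurer–Cartan equations: [L x, L y] = L [x,y] - 2[L x, R y], [R x, R y] = R [y,x] - 2[R x, L y], and [L x, R y] = [R x, L y] for all x, y ∈ V. Define M x = -(L x + R x) and Y(x,y) = (1/6)([L x, L y] + [R x, R y] + [M x, M y]). Then [L x, L y] = 2 Y(x,y) + (1/3) L [x,y] + (2/3) R [x,y]. -/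
theorem stmt0 {K : Type*} [Field K] [CharZero K]
    {V : Type*} [AddCommGroup V] [Module K V]
    {G : Type*} [LieRing G] [LieAlgebra K G]
    (b : V →ₗ[K] V →ₗ[K] V) (L R : V →ₗ[K] G)
    (M : V → G) (hM : ∀ x, M x = -(L x + R x))
    (Y : V → V → G)
    (hY : ∀ x y, Y x y = (6:K)⁻¹ • (⁅L x, L y⁆ + ⁅R x, R y⁆ + ⁅M x, M y⁆))
    (h1 : ∀ x y, ⁅L x, L y⁆ = L (b x y) - (2:K) • ⁅L x, R y⁆)
    (h2 : ∀ x y, ⁅R x, R y⁆ = R (b y x) - (2:K) • ⁅R x, L y⁆)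
    (h3 : ∀ x y, ⁅L x, R y⁆ = ⁅R x, L y⁆)
:
    ∀ x y, ⁅L x, L y⁆ = (2:K) • Y x y + (3:K)⁻¹ • L (b x y) + (2/3:K) • R (b x y) := by
  intro x y
  have e1 := h1 x y
  have e2 := h2 x y
  have e2' := h2 y x
  have e3 := h3 x y
  have e3' := h3 y x
  have sR : ⁅R y, R x⁆ = -⁅R x, R y⁆ := (lie_skew _ _).symm
  have sRL : ⁅L y, R x⁆ = -⁅R x, L y⁆ := by rw [← lie_skew]
  have hyY := hY x y
  rw [hM, hM] at hyY
  simp only [neg_lie, lie_neg, neg_neg, add_lie, lie_add] at hyY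
  rw [e3'] at sRL
  linear_combination (norm := module) (3:K)⁻¹ • e1 + (2/3:K) • e2'
    - (2/3:K) • sR - (4/3:K) • sRL - e3 - (2:K) • hyY
end

section
/- Under the generalized Maurer–Cartan equations, with M x = -(L x + R x) and Y(x,y) = (1/6)([L x, L y] + [R x, R y] + [M x, M y]), one has [L x, R y] = -Y(x,y) + (1/3) L [x,y] - (1/3) R [x,y]. -/
theorem stmt1 {K : Type*} [Field K] [CharZero K]
    {V : Type*} [AddCommGroup V] [Module K V]
    {G : Type*} [LieRing G] [LieAlgebra K G]
    (b : V →ₗ[K] V →ₗ[K] V) (L R : V →ₗ[K] G)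
    (M : V → G) (hM : ∀ x, M x = -(L x + R x))
    (Y : V → V → G)
    (hY : ∀ x y, Y x y = (6:K)⁻¹ • (⁅L x, L y⁆ + ⁅R x, R y⁆ + ⁅M x, M y⁆))
    (h1 : ∀ x y, ⁅L x, L y⁆ = L (b x y) - (2:K) • ⁅L x, R y⁆)
    (h2 : ∀ x y, ⁅R x, R y⁆ = R (b y x) - (2:K) • ⁅R x, L y⁆)
    (h3 : ∀ x y, ⁅L x, R y⁆ = ⁅R x, L y⁆)
:
    ∀ x y, ⁅L x, R y⁆ = -Y x y + (3:K)⁻¹ • L (b x y) - (3:K)⁻¹ • R (b x y) := by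
  intro x y
  have skew : ⁅L y, R x⁆ = -⁅L x, R y⁆ := by
    rw [h3 y x]; exact neg_eq_iff_eq_neg.mp (lie_skew (L x) (R y))
  have key : R (b y x) = - R (b x y) := by
    have e : ⁅R x, R y⁆ + ⁅R y, R x⁆ = 0 := by
      rw [← lie_skew (R x) (R y)]; abel
    rw [h2 x y, h2 y x, ← h3 x y, ← h3 y x, skew] at e
    linear_combination (norm := module) e
  have hMM : ⁅M x, M y⁆ = ⁅L x, L y⁆ + ⁅L x, R y⁆ + ⁅R x, L y⁆ + ⁅R x, R y⁆ := by
    rw [hM x, hM y]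
    simp only [neg_lie, lie_neg, add_lie, lie_add, neg_neg]
    abel
  rw [hY x y, hMM, h1 x y, h2 x y, ← h3 x y, key]
  match_scalars <;> field_simp <;> ring
end

section
/- Under the generalized Maurer–Cartan equations, with M x = -(L x + R x) and Y(x,y) = (1/6)([L x, L y] + [R x, R y] + [M x, M y]), one has [R x, R y] = 2 Y(x,y) - (2/3) L [x,y] - (1/3) R [x,y]. -/
theorem stmt2 {K : Type*} [Field K] [CharZero K]
    {V : Type*} [AddCommGroup V] [Module K V]
    {G : Type*} [LieRing G] [LieAlgebra K G]
    (b : V →ₗ[K] V →ₗ[K] V) (L R : V →ₗ[K] G)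
    (M : V → G) (hM : ∀ x, M x = -(L x + R x))
    (Y : V → V → G)
    (hY : ∀ x y, Y x y = (6:K)⁻¹ • (⁅L x, L y⁆ + ⁅R x, R y⁆ + ⁅M x, M y⁆))
    (h1 : ∀ x y, ⁅L x, L y⁆ = L (b x y) - (2:K) • ⁅L x, R y⁆)
    (h2 : ∀ x y, ⁅R x, R y⁆ = R (b y x) - (2:K) • ⁅R x, L y⁆)
    (h3 : ∀ x y, ⁅L x, R y⁆ = ⁅R x, L y⁆)
:
    ∀ x y, ⁅R x, R y⁆ = (2:K) • Y x y - (2/3:K) • L (b x y) - (3:K)⁻¹ • R (b x y) := by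
  intro x y
  -- key antisymmetry: ⁅L y, R x⁆ = -⁅L x, R y⁆
  have hC : ⁅L y, R x⁆ = -⁅L x, R y⁆ := by
    rw [h3 y x, ← lie_skew]
  -- R (b y x) = - R (b x y)
  have hR2 : R (b y x) = -R (b x y) := by
    have e1 : ⁅R y, R x⁆ = R (b x y) - (2:K) • ⁅R y, L x⁆ := h2 y x
    have e2 : ⁅R y, R x⁆ = -⁅R x, R y⁆ := by rw [← lie_skew]
    have e3 : ⁅R x, R y⁆ = R (b y x) - (2:K) • ⁅R x, L y⁆ := h2 x y
    have e4 : ⁅R y, L x⁆ = -⁅L x, R y⁆ := (h3 y x).symm.trans hC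
    have e5 : ⁅R x, L y⁆ = ⁅L x, R y⁆ := (h3 x y).symm
    rw [e3, e5] at e2
    rw [e4] at e1
    have := e1.symm.trans e2
    linear_combination (norm := module) this
  rw [hY x y, hM x, hM y]
  simp only [neg_add_rev, lie_neg, neg_lie, neg_neg, add_lie, lie_add]
  rw [h1 x y, h2 x y, ← h3 x y, hR2]
  match_scalars <;> norm_num
end

section
/- Under the generalized Maurer–Cartan equations, if Y(x,y) = 0 for all x, y ∈ V, then [L x, L y] = (1/3)L[x,y] + (2/3)R[x,y], [R x, R y] = -(2/3)L[x,y] - (1/3)R[x,y], and [L x, R y] = (1/3)(L[x,y] - R[x,y]); in particular the image of L + R spans a subspace on which [M x, M y] = (1/3)(L[x,y] - R[x,y]). -/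
theorem stmt18 {K : Type*} [Field K] [CharZero K]
    {V : Type*} [AddCommGroup V] [Module K V]
    {G : Type*} [LieRing G] [LieAlgebra K G]
    (b : V →ₗ[K] V →ₗ[K] V) (L R : V →ₗ[K] G)
    (M : V → G) (hM : ∀ x, M x = -(L x + R x))
    (Y : V → V → G)
    (hY : ∀ x y, Y x y = (6:K)⁻¹ • (⁅L x, L y⁆ + ⁅R x, R y⁆ + ⁅M x, M y⁆))
    (h1 : ∀ x y, ⁅L x, L y⁆ = L (b x y) - (2:K) • ⁅L x, R y⁆)
    (h2 : ∀ x y, ⁅R x, R y⁆ = R (b y x) - (2:K) • ⁅R x, L y⁆)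
    (h3 : ∀ x y, ⁅L x, R y⁆ = ⁅R x, L y⁆)
    (hY0 : ∀ x y, Y x y = 0) :
    ∀ x y, ⁅L x, L y⁆ = (3:K)⁻¹ • L (b x y) + (2/3:K) • R (b x y) ∧
      ⁅R x, R y⁆ = -((2/3:K) • L (b x y)) - (3:K)⁻¹ • R (b x y) ∧
      ⁅L x, R y⁆ = (3:K)⁻¹ • (L (b x y) - R (b x y)) ∧
      ⁅M x, M y⁆ = (3:K)⁻¹ • (L (b x y) - R (b x y)) := by
  intro x y
  have skewL : ⁅L y, L x⁆ = -⁅L x, L y⁆ := (lie_skew (L y) (L x)).symm ▸ rfl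
  have skewL : ⁅L y, L x⁆ = -⁅L x, L y⁆ := by rw [← lie_skew]
  have skewR : ⁅R y, R x⁆ = -⁅R x, R y⁆ := by rw [← lie_skew]
  have e3 : ⁅R x, L y⁆ = ⁅L x, R y⁆ := (h3 x y).symm
  have e3' : ⁅L y, R x⁆ = -⁅L x, R y⁆ := by rw [h3 x y, ← lie_skew]
  have e3'' : ⁅R y, L x⁆ = -⁅L x, R y⁆ := by rw [← h3 y x, e3']
  -- antisymmetry of L ∘ b and R ∘ b
  have hLanti : L (b y x) = -L (b x y) := by
    have a1 := h1 x y
    have a2 := h1 y x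
    linear_combination (norm := module) -a2 + skewL + (2:K) • e3' - a1
  have hRanti : R (b y x) = -R (b x y) := by
    have a1 := h2 x y
    have a2 := h2 y x
    linear_combination (norm := module) -a1 - a2 + skewR + (2:K) • e3 + (2:K) • e3''
  have key : ⁅L x, L y⁆ + ⁅R x, R y⁆ + ⁅M x, M y⁆ = 0 := by
    have h := hY0 x y
    rw [hY] at h
    have h6 : (6:K)⁻¹ ≠ 0 := by norm_num
    exact (smul_eq_zero.mp h).resolve_left h6
  have hMxy : ⁅M x, M y⁆ = ⁅L x, L y⁆ + ⁅L x, R y⁆ + ⁅R x, L y⁆ + ⁅R x, R y⁆ := by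
    rw [hM, hM]
    simp only [neg_lie, lie_neg, neg_neg, add_lie, lie_add]
    abel
  have hc : ⁅L x, R y⁆ = (3:K)⁻¹ • (L (b x y) - R (b x y)) := by
    have a1 := h1 x y
    have a2 := h2 x y
    linear_combination (norm := module) -((6:K)⁻¹ • key) + (6:K)⁻¹ • hMxy
      + (3:K)⁻¹ • a1 + (3:K)⁻¹ • a2 + (3:K)⁻¹ • hRanti - (2:K)⁻¹ • e3
  refine ⟨?_, ?_, hc, ?_⟩
  · linear_combination (norm := module) h1 x y - (2:K) • hc
  · linear_combination (norm := module) h2 x y + hRanti - (2:K) • e3 - (2:K) • hc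
  · linear_combination (norm := module) hMxy + h1 x y + h2 x y + hRanti - e3 - (2:K) • hc
end
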